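/- Let α > −1, let q ≥ 0 and n ≥ 0 be integers. Then for every real x, (x²−1) P_{2n}^{α+1,q}(x) − P_{2n+2}^{α,q}(x) = γ_{2n+1}^{α,q} · P_{2n}^{α,q}(x), where γ_{2n+1}^{α,q} = −2 (n+α+1)(2n+2α+2q+3) / [(4n+2α+2q+3)(4n+2α+2q+5)]. -/
import Mathlib


open MeasureTheory intervalIntegral Polynomial

/-- Pochhammer symbol `(a)_k = a (a+1) ⋯ (a+k-1)`. -/
noncomputable def poch (a : ℝ) (k : ℕ) : ℝ := ∏ i ∈ Finset.range k, (a + i)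

/-- `Peven α q n x = P_{2n}^{α,q}(x)`, the monic generalized Gegenbauer-type polynomial
`Σ_{k=0}^{n} (−n)_k (−n−q−1/2)_k / (k! (−2n−α−q−1/2)_k) x^{2n−2k}`. -/
noncomputable def Peven (α : ℝ) (q n : ℕ) (x : ℝ) : ℝ :=
  ∑ k ∈ Finset.range (n + 1),
    poch (-(n : ℝ)) k * poch (-(n : ℝ) - q - 1/2) k /
      ((Nat.factorial k : ℝ) * poch (-(2 * (n : ℝ)) - α - q - 1/2) k) * x ^ (2*n - 2*k)

/-- `Podd α q n x = P_{2n+1}^{α,q}(x) = (1+x) P_{2n}^{α+1,q}(x)`. -/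
noncomputable def Podd (α : ℝ) (q n : ℕ) (x : ℝ) : ℝ := (1 + x) * Peven (α + 1) q n x

/-- `P α q n x = P_n^{α,q}(x)`. -/
noncomputable def P (α : ℝ) (q : ℕ) (n : ℕ) (x : ℝ) : ℝ :=
  if Even n then Peven α q (n / 2) x else Podd α q (n / 2) x

lemma poch_succ (a : ℝ) (k : ℕ) : poch a (k+1) = poch a k * (a + k) := by
  simp [poch, Finset.prod_range_succ]

lemma poch_succ' (a : ℝ) (k : ℕ) : poch a (k+1) = a * poch (a+1) k := by
  rw [poch, poch, Finset.prod_range_succ']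
  rw [mul_comm]
  congr 1
  · norm_num
  · apply Finset.prod_congr rfl; intro i _; push_cast; ring

lemma poch_succ_front (a : ℝ) (k : ℕ) : poch (a - 1) (k+1) = (a - 1) * poch a k := by
  have h : a - 1 + 1 = a := by ring
  rw [poch_succ', h]

lemma poch_ne_zero (a : ℝ) (k : ℕ) (h : a + k < 1) : poch a k ≠ 0 := by
  rw [poch]
  apply Finset.prod_ne_zero_iff.mpr
  intro i hi
  have hi' : (i : ℝ) ≤ (k : ℝ) - 1 := by
    have := Finset.mem_range.mp hi
    have : (i : ℝ) + 1 ≤ k := by exact_mod_cast this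
    linarith
  have : a + i < 0 := by linarith
  linarith

lemma poch_pred (a : ℝ) (k : ℕ) (h : a - 1 + k ≠ 0) :
    poch (a-1) k = (a-1) * poch a k / (a - 1 + k) := by
  have h1 := poch_succ (a-1) k
  have h2 := poch_succ_front a k
  field_simp
  rw [← h1, h2]

noncomputable def pcoeff (α : ℝ) (q n k : ℕ) : ℝ :=
  poch (-(n : ℝ)) k * poch (-(n : ℝ) - q - 1/2) k /
      ((Nat.factorial k : ℝ) * poch (-(2 * (n : ℝ)) - α - q - 1/2) k)

set_option maxHeartbeats 1600000 in
lemma key (α : ℝ) (hα : -1 < α) (q n j : ℕ) (hj : j ≤ n) :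
    pcoeff (α+1) q n (j+1) - pcoeff (α+1) q n j - pcoeff α q (n+1) (j+1)
      = (-2 * ((n : ℝ) + α + 1) * (2 * (n : ℝ) + 2 * α + 2 * q + 3) /
              ((4 * (n : ℝ) + 2 * α + 2 * q + 3) * (4 * (n : ℝ) + 2 * α + 2 * q + 5))) *
          pcoeff α q n j := by
  have hjn : (j : ℝ) ≤ (n : ℝ) := by exact_mod_cast hj
  have hq0 : (0:ℝ) ≤ q := Nat.cast_nonneg q
  have hn0 : (0:ℝ) ≤ n := Nat.cast_nonneg n
  simp only [pcoeff, Nat.factorial_succ]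
  push_cast
  set B : ℝ := -(2 * (n:ℝ)) - α - (q:ℝ) - 1/2 with hB
  rw [show -(2 * (n:ℝ)) - (α + 1) - (q:ℝ) - 1/2 = B - 1 from by rw [hB]; ring]
  rw [show -(2 * ((n:ℝ) + 1)) - α - (q:ℝ) - 1/2 = B - 2 from by rw [hB]; ring]
  rw [show -((n:ℝ) + 1) - (q:ℝ) - 1/2 = (-(n:ℝ) - (q:ℝ) - 1/2) - 1 from by ring]
  rw [show -((n:ℝ) + 1) = (-(n:ℝ)) - 1 from by ring]
  have hα' : -α < 1 := by linarith
  have hBj : poch B j ≠ 0 := poch_ne_zero _ _ (by rw [hB]; linarith)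
  have hfact : ((Nat.factorial j : ℕ) : ℝ) ≠ 0 := by positivity
  have hj1 : (j:ℝ) + 1 ≠ 0 := by positivity
  have hB1 : B - 1 ≠ 0 := by rw [hB]; intro h; nlinarith
  have hB2 : B - 2 ≠ 0 := by rw [hB]; intro h; nlinarith
  have hden : B - 1 + (j:ℝ) ≠ 0 := by rw [hB]; intro h; nlinarith
  have hg1 : 4 * (n:ℝ) + 2 * α + 2 * (q:ℝ) + 3 ≠ 0 := by intro h; nlinarith
  have hg2 : 4 * (n:ℝ) + 2 * α + 2 * (q:ℝ) + 5 ≠ 0 := by intro h; nlinarith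
  rw [poch_succ (-(n:ℝ)) j, poch_succ (-(n:ℝ) - (q:ℝ) - 1/2) j]
  rw [poch_succ_front B j]
  rw [show B - 2 = (B - 1) - 1 from by ring, poch_succ_front (B-1) j]
  rw [poch_succ_front (-(n:ℝ)) j, poch_succ_front (-(n:ℝ) - (q:ℝ) - 1/2) j]
  rw [poch_pred B j hden]
  set N := poch (-(n:ℝ)) j with hN
  set M := poch (-(n:ℝ) - (q:ℝ) - 1/2) j with hM
  set Bj := poch B j with hBj'
  set F := ((Nat.factorial j : ℕ) : ℝ) with hF
  clear_value N M Bj F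
  clear hN hM hBj' hF
  clear hj hjn
  rw [show F * ((B - 1) * Bj / (B - 1 + (j:ℝ))) = F * (B-1) * Bj / (B - 1 + (j:ℝ)) from by ring]
  rw [show ((j:ℝ) + 1) * F * ((B - 1 - 1) * ((B - 1) * Bj / (B - 1 + (j:ℝ))))
        = ((j:ℝ)+1) * F * (B-2) * (B-1) * Bj / (B - 1 + (j:ℝ)) from by ring]
  rw [div_div_eq_mul_div, div_div_eq_mul_div, div_mul_div_comm]
  have hdA : ((j:ℝ) + 1) * F * ((B - 1) * Bj) ≠ 0 :=
    mul_ne_zero (mul_ne_zero hj1 hfact) (mul_ne_zero hB1 hBj)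
  have hdB : F * (B - 1) * Bj ≠ 0 := mul_ne_zero (mul_ne_zero hfact hB1) hBj
  have hdC : ((j:ℝ)+1) * F * (B-2) * (B-1) * Bj ≠ 0 :=
    mul_ne_zero (mul_ne_zero (mul_ne_zero (mul_ne_zero hj1 hfact) hB2) hB1) hBj
  have hdD : (4 * (n:ℝ) + 2 * α + 2 * (q:ℝ) + 3) * (4 * (n:ℝ) + 2 * α + 2 * (q:ℝ) + 5) * (F * Bj) ≠ 0 :=
    mul_ne_zero (mul_ne_zero hg1 hg2) (mul_ne_zero hfact hBj)
  rw [div_sub_div _ _ hdA hdB, div_sub_div _ _ (mul_ne_zero hdA hdB) hdC,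
    div_eq_div_iff (mul_ne_zero (mul_ne_zero hdA hdB) hdC) hdD]
  rw [hB]
  ring

lemma poch_neg_nat_succ (n : ℕ) : poch (-(n:ℝ)) (n+1) = 0 := by
  rw [poch]
  exact Finset.prod_eq_zero (Finset.self_mem_range_succ n) (by simp)


/-- `(x²−1) P_{2n}^{α+1,q}(x) − P_{2n+2}^{α,q}(x) = γ_{2n+1}^{α,q} P_{2n}^{α,q}(x)` with
`γ_{2n+1}^{α,q} = −2(n+α+1)(2n+2α+2q+3)/((4n+2α+2q+3)(4n+2α+2q+5))`. -/
theorem gamma_odd_relation (α : ℝ) (hα : -1 < α) (q n : ℕ) :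
    ∀ x : ℝ,
      (x ^ 2 - 1) * Peven (α + 1) q n x - Peven α q (n + 1) x
        = (-2 * ((n : ℝ) + α + 1) * (2 * (n : ℝ) + 2 * α + 2 * q + 3) /
              ((4 * (n : ℝ) + 2 * α + 2 * q + 3) * (4 * (n : ℝ) + 2 * α + 2 * q + 5))) *
            Peven α q n x := by
  intro x
  set γ : ℝ := -2 * ((n : ℝ) + α + 1) * (2 * (n : ℝ) + 2 * α + 2 * q + 3) /
              ((4 * (n : ℝ) + 2 * α + 2 * q + 3) * (4 * (n : ℝ) + 2 * α + 2 * q + 5)) with hγ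
  have hPev : ∀ (β : ℝ) (m : ℕ),
      Peven β q m x = ∑ k ∈ Finset.range (m+1), pcoeff β q m k * x ^ (2*m - 2*k) :=
    fun β m => rfl
  have hpcoeff0 : ∀ (β : ℝ) (m : ℕ), pcoeff β q m 0 = 1 := by
    intro β m; simp [pcoeff, poch]
  have hzero : pcoeff (α+1) q n (n+1) = 0 := by
    simp [pcoeff, poch_neg_nat_succ]
  have hB : x^2 * Peven (α+1) q n x
      = ∑ k ∈ Finset.range (n+2), pcoeff (α+1) q n k * x ^ (2*(n+1) - 2*k) := by
    rw [Finset.sum_range_succ, hzero, zero_mul, add_zero, hPev (α+1) n, Finset.mul_sum]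
    apply Finset.sum_congr rfl
    intro k hk
    have hk' : k ≤ n := Nat.lt_succ_iff.mp (Finset.mem_range.mp hk)
    have he : 2*(n+1) - 2*k = (2*n - 2*k) + 2 := by omega
    rw [he, pow_add]
    ring
  have hC : (∑ k ∈ Finset.range (n+2),
        (if k = 0 then (0:ℝ) else pcoeff (α+1) q n (k-1)) * x ^ (2*(n+1) - 2*k))
      = Peven (α+1) q n x := by
    rw [Finset.sum_range_succ']
    simp only [Nat.add_sub_cancel, if_neg (Nat.succ_ne_zero _), if_true, eq_self_iff_true, zero_mul, add_zero]
    rw [hPev (α+1) n]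
    apply Finset.sum_congr rfl
    intro k hk
    have he : 2*(n+1) - 2*(k+1) = 2*n - 2*k := by omega
    rw [he]
  have hD : (∑ k ∈ Finset.range (n+2),
        (if k = 0 then (0:ℝ) else γ * pcoeff α q n (k-1)) * x ^ (2*(n+1) - 2*k))
      = γ * Peven α q n x := by
    rw [Finset.sum_range_succ']
    simp only [Nat.add_sub_cancel, if_neg (Nat.succ_ne_zero _), if_true, eq_self_iff_true, zero_mul, add_zero]
    rw [hPev α n, Finset.mul_sum]
    apply Finset.sum_congr rfl
    intro k hk
    have he : 2*(n+1) - 2*(k+1) = 2*n - 2*k := by omega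
    rw [he, mul_assoc]
  have step : (x ^ 2 - 1) * Peven (α + 1) q n x - Peven α q (n + 1) x
      = x^2 * Peven (α+1) q n x - Peven (α+1) q n x - Peven α q (n+1) x := by ring
  rw [step, hB, ← hC, hPev α (n+1), ← hD]
  rw [← Finset.sum_sub_distrib, ← Finset.sum_sub_distrib]
  apply Finset.sum_congr rfl
  intro k hk
  match k with
  | 0 =>
    rw [if_pos rfl, if_pos rfl, hpcoeff0 (α+1) n, hpcoeff0 α (n+1)]
    ring
  | j+1 =>
    have hjn : j ≤ n := by
      have := Finset.mem_range.mp hk; omega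
    simp only [if_neg (Nat.succ_ne_zero _), Nat.add_sub_cancel]
    rw [← sub_mul, ← sub_mul, key α hα q n j hjn, hγ]
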